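/- arXiv:1011.6358 — 3 statements merged into one kernel-verified Lean document; each statement's English description precedes it below -/
import Mathlib

section
/- Let V be a finite-dimensional real inner product space, and let u₁, u₂ : V → ℂ be real-linear maps such that the map (u₁,u₂) : V → ℂ² has a right inverse of operator norm at most η^{-1}, and ‖u₁‖ ≤ 2C, ‖u₂‖ ≤ 2C. Let Π₁ = ker u₁, Π₂ = ker u₂, and define κ = max{|⟨x,y⟩| : x ∈ Π₁, y ∈ Π₂, ‖x‖ = ‖y‖ = 1}. Then κ² ≤ 1 − η²/(4C²). -/
/-!
Since `dim V = 4 = dim_ℝ ℂ²`, the right inverse `R` of `(u₁, u₂)` is a two-sided inverse, so a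
unit vector `y ∈ ker u₂` satisfies `1 = ‖R (u₁ y, 0)‖ ≤ η⁻¹ ‖u₁ y‖`. On the other hand `u₁` kills
the unit vector `x`, so `u₁ y = u₁ (y - ⟪x, y⟫ x)`, and `‖y - ⟪x, y⟫ x‖² = 1 - ⟪x, y⟫²`. Hence
`η² ≤ ‖u₁ y‖² ≤ 4C² (1 - ⟪x, y⟫²)`.
-/

open Module Function

theorem LinearMap.leftInverse_of_rightInverse_of_finrank_eq {K V W : Type*} [DivisionRing K]
    [AddCommGroup V] [Module K V] [AddCommGroup W] [Module K W]
    [FiniteDimensional K V] [FiniteDimensional K W] (hVW : finrank K V = finrank K W)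
    {T : V →ₗ[K] W} {R : W →ₗ[K] V} (hTR : LeftInverse T R) : LeftInverse R T :=
  hTR.rightInverse_of_injective <|
    (injective_iff_surjective_of_finrank_eq_finrank hVW).mpr hTR.surjective

theorem norm_sub_inner_smul_sq_of_norm_eq_one {V : Type*} [NormedAddCommGroup V]
    [InnerProductSpace ℝ V] {x : V} (hx : ‖x‖ = 1) (y : V) :
    ‖y - inner ℝ x y • x‖ ^ 2 = ‖y‖ ^ 2 - inner ℝ x y ^ 2 := by
  rw [norm_sub_sq_real, real_inner_smul_right, real_inner_comm, norm_smul, Real.norm_eq_abs, hx]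
  ring_nf
  rw [sq_abs]
  ring

theorem ContinuousLinearMap.sq_norm_apply_le_of_apply_eq_zero {V F : Type*}
    [NormedAddCommGroup V] [InnerProductSpace ℝ V] [SeminormedAddCommGroup F] [NormedSpace ℝ F]
    (u : V →L[ℝ] F) {x : V} (hux : u x = 0) (hx : ‖x‖ = 1) (y : V) :
    ‖u y‖ ^ 2 ≤ ‖u‖ ^ 2 * (‖y‖ ^ 2 - inner ℝ x y ^ 2) := by
  have huy : u y = u (y - inner ℝ x y • x) := by simp [hux]
  rw [← norm_sub_inner_smul_sq_of_norm_eq_one hx, huy, ← mul_pow]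
  gcongr
  exact u.le_opNorm _

theorem kernel_angle_bound_general {V : Type*} [NormedAddCommGroup V] [InnerProductSpace ℝ V]
    [FiniteDimensional ℝ V] (hdim : Module.finrank ℝ V = 4)
    (u₁ u₂ : V →L[ℝ] ℂ) (η C : ℝ) (hη : 0 < η) (hC : 0 < C)
    (R : (ℂ × ℂ) →L[ℝ] V)
    (hR : (u₁.prod u₂).comp R = ContinuousLinearMap.id ℝ (ℂ × ℂ))
    (hRnorm : ‖R‖ ≤ η⁻¹) (hu₁ : ‖u₁‖ ≤ 2 * C) :
    ∀ x y : V, x ∈ LinearMap.ker (u₁ : V →ₗ[ℝ] ℂ) → y ∈ LinearMap.ker (u₂ : V →ₗ[ℝ] ℂ) → ‖x‖ = 1 → ‖y‖ = 1 →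
      |(inner ℝ x y : ℝ)| ^ 2 ≤ 1 - η ^ 2 / (4 * C ^ 2) := by
  intro x y (hx : u₁ x = 0) (hy : u₂ y = 0) hx1 hy1
  have hRu : LeftInverse R (u₁.prod u₂) :=
    LinearMap.leftInverse_of_rightInverse_of_finrank_eq (T := (u₁.prod u₂ : V →ₗ[ℝ] ℂ × ℂ))
      (by simp [hdim]) fun w => congr($hR w)
  have hlow : 1 ≤ η⁻¹ * ‖u₁ y‖ :=
    calc 1 = ‖R (u₁.prod u₂ y)‖ := by rw [hRu y, hy1]
      _ ≤ ‖R‖ * ‖u₁.prod u₂ y‖ := R.le_opNorm _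
      _ = ‖R‖ * ‖u₁ y‖ := by simp [hy]
      _ ≤ η⁻¹ * ‖u₁ y‖ := by gcongr
  rw [inv_mul_eq_div, one_le_div hη] at hlow
  have hcos : 0 ≤ 1 - inner ℝ x y ^ 2 := by
    have := abs_real_inner_le_norm x y
    rw [hx1, hy1, one_mul, ← sq_le_one_iff_abs_le_one] at this
    linarith
  have hkey : η ^ 2 ≤ 4 * C ^ 2 * (1 - inner ℝ x y ^ 2) :=
    calc η ^ 2 ≤ ‖u₁ y‖ ^ 2 := by gcongr
      _ ≤ ‖u₁‖ ^ 2 * (1 - inner ℝ x y ^ 2) := by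
        simpa [hy1] using u₁.sq_norm_apply_le_of_apply_eq_zero hx hx1 y
      _ ≤ (2 * C) ^ 2 * (1 - inner ℝ x y ^ 2) := by gcongr
      _ = 4 * C ^ 2 * (1 - inner ℝ x y ^ 2) := by ring
  rw [sq_abs, le_sub_comm]
  exact (div_le_iff₀' (by positivity)).mpr hkey

/-- Angle bound between kernels of two uniformly transverse linear maps:
if `(u₁,u₂) : V → ℂ²` has a right inverse of norm `≤ η⁻¹` and `‖uᵢ‖ ≤ 2C`, then
for unit vectors `x ∈ ker u₁`, `y ∈ ker u₂` one has `|⟨x,y⟩|² ≤ 1 − η²/(4C²)`. -/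
theorem kernel_angle_bound {V : Type*} [NormedAddCommGroup V] [InnerProductSpace ℝ V]
    [FiniteDimensional ℝ V] (hdim : Module.finrank ℝ V = 4)
    (u₁ u₂ : V →L[ℝ] ℂ) (η C : ℝ) (hη : 0 < η) (hC : 0 < C)
    (R : (ℂ × ℂ) →L[ℝ] V)
    (hR : (u₁.prod u₂).comp R = ContinuousLinearMap.id ℝ (ℂ × ℂ))
    (hRnorm : ‖R‖ ≤ η⁻¹) (hu₁ : ‖u₁‖ ≤ 2 * C) (hu₂ : ‖u₂‖ ≤ 2 * C) :
    ∀ x y : V, x ∈ LinearMap.ker (u₁ : V →ₗ[ℝ] ℂ) → y ∈ LinearMap.ker (u₂ : V →ₗ[ℝ] ℂ) → ‖x‖ = 1 → ‖y‖ = 1 →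
      |(inner ℝ x y : ℝ)| ^ 2 ≤ 1 - η ^ 2 / (4 * C ^ 2) :=
  kernel_angle_bound_general hdim u₁ u₂ η C hη hC R hR hRnorm hu₁
end

section
/- Let a > 0, γ < 1, A > 0. The map Φ : (z,w) ↦ (√(1 − γ|w|²)·z, √a·e^{i h(z)}·w), for any smooth real function h, when expressed in the coordinates 𝒫 = |z|², R = |w|², 𝒫' = |z'|², R' = |w'|², sends 𝒫' = (1 − γR)𝒫, R' = aR; and it pushes forward the vector field X with Ṙ = 1 − R, 𝒫̇ = −((1−γ)/(1−γR))𝒫 to a vector field whose (R',𝒫') components are Ṙ' = a − R' and 𝒫̇' = −𝒫'. -/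
/-!
Since `|e^{iθ}| = 1` and `|√c z|² = c|z|²` for `c ≥ 0`, the map `Φ` rescales `R` by `a` and `𝒫`
by `1 − γR`. Along the flow, `R' = aR` gives `Ṙ' = a(1 − R) = a − R'`, and the product rule gives
`𝒫̇' = −γṘ𝒫 + (1 − γR)𝒫̇ = (−γ(1 − R) − (1 − γ))𝒫 = −(1 − γR)𝒫 = −𝒫'`.
-/

open Complex

theorem Complex.norm_ofReal_sqrt_mul_sq {c : ℝ} (hc : 0 ≤ c) (z : ℂ) :
    ‖(Real.sqrt c : ℂ) * z‖ ^ 2 = c * ‖z‖ ^ 2 := by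
  rw [norm_mul, mul_pow, norm_real, Real.norm_eq_abs, abs_of_nonneg (Real.sqrt_nonneg _),
    Real.sq_sqrt hc]

theorem Complex.norm_ofReal_sqrt_mul_exp_I_mul_sq {c : ℝ} (hc : 0 ≤ c) (θ : ℝ) (w : ℂ) :
    ‖(Real.sqrt c : ℂ) * exp (I * θ) * w‖ ^ 2 = c * ‖w‖ ^ 2 := by
  rw [mul_assoc, norm_ofReal_sqrt_mul_sq hc, norm_mul, norm_exp_I_mul_ofReal, one_mul]

theorem HasDerivAt.mul_of_hasDerivAt_neg_div_mul {F P : ℝ → ℝ} {F' k t : ℝ}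
    (hF : HasDerivAt F F' t) (hFt : F t ≠ 0) (hP : HasDerivAt P (-(k / F t) * P t) t) :
    HasDerivAt (fun s => F s * P s) ((F' - k) * P t) t := by
  refine (hF.mul hP).congr_deriv ?_
  field_simp
  ring

theorem cse_coordinate_change_general (a γ : ℝ) (ha : 0 < a)
    (h : ℂ → ℝ) (R P : ℝ → ℝ) (hRγ : ∀ t, 1 - γ * R t ≠ 0)
    (hR : ∀ t, HasDerivAt R (1 - R t) t)
    (hP : ∀ t, HasDerivAt P (-((1 - γ) / (1 - γ * R t)) * P t) t) :
    (∀ z w : ℂ, 0 ≤ 1 - γ * ‖w‖ ^ 2 →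
      ‖(Real.sqrt (1 - γ * ‖w‖ ^ 2) : ℂ) * z‖ ^ 2 = (1 - γ * ‖w‖ ^ 2) * ‖z‖ ^ 2 ∧
      ‖(Real.sqrt a : ℂ) * Complex.exp (Complex.I * (h z : ℂ)) * w‖ ^ 2
        = a * ‖w‖ ^ 2) ∧
    (∀ t, HasDerivAt (fun s => a * R s) (a - a * R t) t) ∧
    (∀ t, HasDerivAt (fun s => (1 - γ * R s) * P s) (-((1 - γ * R t) * P t)) t) := by
  refine ⟨fun z w hw => ⟨norm_ofReal_sqrt_mul_sq hw z,
    norm_ofReal_sqrt_mul_exp_I_mul_sq ha.le (h z) w⟩, fun t => ?_, fun t => ?_⟩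
  · simpa only [mul_sub, mul_one] using (hR t).const_mul a
  · have hF : HasDerivAt (fun s => 1 - γ * R s) (-(γ * (1 - R t))) t :=
      ((hR t).const_mul γ).const_sub 1
    refine (hF.mul_of_hasDerivAt_neg_div_mul (hRγ t) (hP t)).congr_deriv ?_
    ring

/-- Lemma "cse" (ii)-(iii): the map `Φ(z,w) = (√(1−γ|w|²)z, √a e^{ih(z)}w)` sends
`𝒫 = |z|²`, `R = |w|²` to `𝒫' = (1 − γR)𝒫`, `R' = aR`; and it pushes the vector
field with `Ṙ = 1 − R`, `𝒫̇ = −((1−γ)/(1−γR))𝒫` forward to one with radial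
components `Ṙ' = a − R'`, `𝒫̇' = −𝒫'`. -/
theorem cse_coordinate_change (a γ A : ℝ) (ha : 0 < a) (hγ : γ < 1) (hA : 0 < A)
    (h : ℂ → ℝ) (R P : ℝ → ℝ) (hRγ : ∀ t, 1 - γ * R t ≠ 0)
    (hR : ∀ t, HasDerivAt R (1 - R t) t)
    (hP : ∀ t, HasDerivAt P (-((1 - γ) / (1 - γ * R t)) * P t) t) :
    (∀ z w : ℂ, 0 ≤ 1 - γ * ‖w‖ ^ 2 →
      ‖(Real.sqrt (1 - γ * ‖w‖ ^ 2) : ℂ) * z‖ ^ 2 = (1 - γ * ‖w‖ ^ 2) * ‖z‖ ^ 2 ∧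
      ‖(Real.sqrt a : ℂ) * Complex.exp (Complex.I * (h z : ℂ)) * w‖ ^ 2
        = a * ‖w‖ ^ 2) ∧
    (∀ t, HasDerivAt (fun s => a * R s) (a - a * R t) t) ∧
    (∀ t, HasDerivAt (fun s => (1 - γ * R s) * P s) (-((1 - γ * R t) * P t)) t) :=
  cse_coordinate_change_general a γ ha h R P hRγ hR hP
end

section
/- With ω_i = (1 − γr²)π*τ + dr² ∧ α + Σπ*τ_{jk} and λ_i = (1−r²)α + (1−γ)π*λ' + Σπ*λ_{jk}, the Liouville vector field X defined by ι_X ω_i = λ_i satisfies dr²(X) = 1 − r² > 0 near the zero section {r = 0}; in particular X points away from the zero section. -/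
/-- Lemma "gluliou" computation, pointwise in coordinates `(v₁,v₂,v₃,v₄)` (base
directions, `∂r`, `∂θ`): with
`ω_i = (1−γr²)π*τ + dr²∧α + Σπ*τⱼₖ` (base 2-forms with coefficients `T`, `Tⱼₖ`;
`α = A₁dρ + A₂dζ + a dθ`, `dr²(v) = 2r v₃`) and
`λ_i = (1−r²)α + (1−γ)π*λ' + Σπ*λⱼₖ` (base 1-forms `λ'`, `λⱼₖ`), the vector `X`
with `ι_X ω_i = λ_i` satisfies `dr²(X) = 1 − r²`. -/
theorem liouville_field_radial {n : ℕ} (a r γ T : ℝ) (Tjk : Fin n → ℝ)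
    (A₁ A₂ p₁ p₂ : ℝ) (pjk qjk : Fin n → ℝ) (ha : a ≠ 0)
    (X₁ X₂ X₃ X₄ : ℝ)
    (hX : ∀ v₁ v₂ v₃ v₄ : ℝ,
      ((1 - γ * r ^ 2) * T + ∑ j, Tjk j) * (X₁ * v₂ - X₂ * v₁)
          + (2 * r * X₃) * (A₁ * v₁ + A₂ * v₂ + a * v₄)
          - (2 * r * v₃) * (A₁ * X₁ + A₂ * X₂ + a * X₄)
        = (1 - r ^ 2) * (A₁ * v₁ + A₂ * v₂ + a * v₄)
          + (1 - γ) * (p₁ * v₁ + p₂ * v₂)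
          + ∑ j, (pjk j * v₁ + qjk j * v₂)) :
    2 * r * X₃ = 1 - r ^ 2 := by
  have h := hX 0 0 0 1
  have h2 : a * (2 * r * X₃) = a * (1 - r ^ 2) := by
    have hs : ∀ j : Fin n, pjk j * 0 + qjk j * 0 = 0 := by intro j; ring
    simp only [hs, Finset.sum_const_zero] at h
    linarith
  exact mul_left_cancel₀ ha h2
end
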